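/- Let s_0 > 0, s_1 > 0, τ ∈ ℝ, N ≥ 1, and f(t) = e^{-2 s_1 t² + 2 s_0 τ t}. Then for every t ∈ ℝ the (2N)-th derivative satisfies f^{(2N)}(t) = (2 s_1)^N e^{-2 s_1 t² + 2 s_0 τ t} H_{2N}((s_0 τ - 2 s_1 t)/√(2 s_1)), and sup_{t ∈ ℝ} |f^{(2N)}(t)| = (2 s_1)^N e^{s_0² τ²/(2 s_1)} · (2N)!/N!. -/

import Mathlib

open Real MeasureTheory Finset Nat

/-- Physicist's Hermite polynomial via the Rodrigues formula. -/
noncomputable def hermiteH (n : ℕ) (t : ℝ) : ℝ :=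
  (-1 : ℝ) ^ n * Real.exp (t ^ 2) * iteratedDeriv n (fun s => Real.exp (-s ^ 2)) t

open Complex FourierTransform Polynomial

lemma contDiff_gauss : ContDiff ℝ (⊤ : ℕ∞) (fun s : ℝ => Real.exp (-s ^ 2)) :=
  ((contDiff_id.pow 2).neg).exp

lemma itd_gauss (n : ℕ) (x : ℝ) :
    iteratedDeriv n (fun s : ℝ => Real.exp (-s ^ 2)) x
      = (-1 : ℝ) ^ n * Real.exp (-x ^ 2) * hermiteH n x := by
  have h2 : ((-1 : ℝ) ^ n) ^ 2 = 1 := by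
    rw [← pow_mul, mul_comm, pow_mul, neg_one_sq, one_pow]
  simp only [hermiteH]
  rw [show ∀ D : ℝ, (-1 : ℝ) ^ n * Real.exp (-x ^ 2) * ((-1) ^ n * Real.exp (x ^ 2) * D)
      = ((-1 : ℝ) ^ n) ^ 2 * (Real.exp (-x ^ 2) * Real.exp (x ^ 2)) * D from fun D => by ring,
    h2, ← Real.exp_add]
  simp

-- evenness
lemma itd_gauss_even (N : ℕ) (x : ℝ) :
    iteratedDeriv (2 * N) (fun s : ℝ => Real.exp (-s ^ 2)) (-x)
      = iteratedDeriv (2 * N) (fun s : ℝ => Real.exp (-s ^ 2)) x := by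
  have h := iteratedDeriv_comp_neg (2 * N) (fun s : ℝ => Real.exp (-s ^ 2)) x
  rw [show (fun s : ℝ => Real.exp (-(-s) ^ 2)) = fun s : ℝ => Real.exp (-s ^ 2) by
    funext s; rw [neg_sq]] at h
  rw [h, pow_mul, neg_one_sq, one_pow, one_smul]

lemma hermiteH_even (N : ℕ) (x : ℝ) : hermiteH (2 * N) (-x) = hermiteH (2 * N) x := by
  simp [hermiteH, itd_gauss_even, neg_sq]

lemma itd_gauss_zero (N : ℕ) (hN : 1 ≤ N) :
    iteratedDeriv (2 * N) (fun s : ℝ => Real.exp (-s ^ 2)) 0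
      = (-1 : ℝ) ^ N * ((2 * N)! / (N ! : ℝ)) := by
  have hg : (fun s : ℝ => Real.exp (-s ^ 2))
      = fun s => (fun y : ℝ => Real.exp (-(y ^ 2 / 2))) (Real.sqrt 2 * s) := by
    funext s
    simp only []
    congr 1
    rw [mul_pow, Real.sq_sqrt (by norm_num : (0:ℝ) ≤ 2)]
    ring
  have hG : ContDiff ℝ (2 * N : ℕ) (fun y : ℝ => Real.exp (-(y ^ 2 / 2))) :=
    (((contDiff_id.pow 2).div_const 2).neg).exp
  rw [hg, iteratedDeriv_comp_const_mul hG (Real.sqrt 2)]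
  simp only [mul_zero]
  rw [iteratedDeriv_eq_iterate, Polynomial.deriv_gaussian_eq_hermite_mul_gaussian]
  have haev : (Polynomial.aeval (0:ℝ) (Polynomial.hermite (2*N)))
      = (((-1 : ℤ)^N * (2*N-1)‼ : ℤ) : ℝ) := by
    rw [Polynomial.aeval_def, Polynomial.eval₂_eq_eval_map,
      ← Polynomial.coeff_zero_eq_eval_zero, Polynomial.coeff_map]
    have := Polynomial.coeff_hermite_explicit N 0
    rw [add_zero] at this
    rw [this]
    push_cast
    simp
  rw [haev]
  have hsq : (Real.sqrt 2) ^ (2 * N) = 2 ^ N := by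
    rw [pow_mul, Real.sq_sqrt (by norm_num : (0:ℝ) ≤ 2)]
  have hneg : (-1 : ℝ) ^ (2 * N) = 1 := by
    rw [pow_mul, neg_one_sq, one_pow]
  have key : ((2 * N)! : ℝ) = 2 ^ N * (N ! : ℝ) * ((2 * N - 1)‼ : ℝ) := by
    have h1 : (2 * N)! = (2 * N)‼ * (2 * N - 1)‼ := by
      obtain ⟨m, rfl⟩ : ∃ m, N = m + 1 := ⟨N - 1, by omega⟩
      have h2 := Nat.factorial_eq_mul_doubleFactorial (2 * (m + 1) - 1)
      rw [show 2 * (m + 1) - 1 + 1 = 2 * (m + 1) from by omega] at h2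
      exact h2
    rw [h1, Nat.doubleFactorial_two_mul]
    push_cast
    ring
  rw [hsq, hneg, key]
  have hfac : (N ! : ℝ) ≠ 0 := Nat.cast_ne_zero.mpr (Nat.factorial_ne_zero N)
  push_cast
  rw [show (-((0:ℝ) ^ 2 / 2)) = 0 by norm_num, Real.exp_zero]
  field_simp

lemma integrable_abs_pow_gauss (n : ℕ) {b : ℝ} (hb : 0 < b) :
    Integrable fun x : ℝ => |x| ^ n * Real.exp (-b * x ^ 2) := by
  have hb2 : 0 < b / 2 := by linarith
  apply Integrable.mono'
    ((integrable_exp_neg_mul_sq hb2).const_mul ((n ! : ℝ) * Real.exp (1 / (2 * b))))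
  · exact ((measurable_abs.pow_const n).mul
      (((measurable_id.pow_const 2).const_mul (-b)).exp)).aestronglyMeasurable
  · filter_upwards with x
    have hxp : (0:ℝ) ≤ |x| ^ n * Real.exp (-b * x ^ 2) := by positivity
    rw [Real.norm_eq_abs, _root_.abs_of_nonneg hxp]
    have h1 : |x| ^ n ≤ (n ! : ℝ) * Real.exp |x| := by
      have hs := Real.sum_le_exp_of_nonneg (abs_nonneg x) (n + 1)
      have h2 : |x| ^ n / (n ! : ℝ) ≤ ∑ i ∈ Finset.range (n + 1), |x| ^ i / (i ! : ℝ) :=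
        Finset.single_le_sum (f := fun i => |x| ^ i / (i ! : ℝ)) (fun i _ => by positivity) (Finset.self_mem_range_succ n)
      have h3 := h2.trans hs
      have hfac : (0:ℝ) < (n ! : ℝ) := by exact_mod_cast Nat.factorial_pos n
      rw [div_le_iff₀ hfac] at h3
      linarith [h3]
    have h2 : |x| ≤ b / 2 * x ^ 2 + 1 / (2 * b) := by
      have hsq := sq_nonneg (b * |x| - 1)
      have hax : |x| ^ 2 = x ^ 2 := sq_abs x
      have hb' : 0 < 2 * b := by linarith
      rw [← hax]
      have key : 2 * b * |x| ≤ b ^ 2 * |x| ^ 2 + 1 := by nlinarith [hsq]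
      calc |x| = (2 * b * |x|) / (2 * b) := by field_simp
        _ ≤ (b ^ 2 * |x| ^ 2 + 1) / (2 * b) := by gcongr
        _ = b / 2 * |x| ^ 2 + 1 / (2 * b) := by field_simp
    calc |x| ^ n * Real.exp (-b * x ^ 2)
        ≤ ((n ! : ℝ) * Real.exp |x|) * Real.exp (-b * x ^ 2) := by
          apply mul_le_mul_of_nonneg_right h1 (Real.exp_nonneg _)
      _ = (n ! : ℝ) * Real.exp (|x| + -b * x ^ 2) := by rw [Real.exp_add]; ring
      _ ≤ (n ! : ℝ) * Real.exp (1 / (2 * b) + -(b / 2) * x ^ 2) := by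
          apply mul_le_mul_of_nonneg_left _ (by positivity)
          apply Real.exp_le_exp.mpr
          nlinarith [h2]
      _ = (n ! : ℝ) * Real.exp (1 / (2 * b)) * Real.exp (-(b / 2) * x ^ 2) := by
          rw [Real.exp_add]; ring

lemma integrable_pow_gauss (n : ℕ) {b : ℝ} (hb : 0 < b) :
    Integrable fun x : ℝ => x ^ n * Real.exp (-b * x ^ 2) := by
  apply Integrable.mono' (integrable_abs_pow_gauss n hb)
  · exact (((measurable_id.pow_const n)).mul
      (((measurable_id.pow_const 2).const_mul (-b)).exp)).aestronglyMeasurable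
  · filter_upwards with x
    rw [Real.norm_eq_abs, abs_mul, _root_.abs_of_nonneg (Real.exp_nonneg _), pow_abs]

lemma iteratedDeriv_ofReal (f : ℝ → ℝ) (hf : ContDiff ℝ (⊤ : ℕ∞) f) :
    ∀ (n : ℕ) (x : ℝ), iteratedDeriv n (fun t => ((f t : ℝ) : ℂ)) x
      = ((iteratedDeriv n f x : ℝ) : ℂ) := by
  intro n
  induction n with
  | zero => intro x; simp [iteratedDeriv_zero]
  | succ n ih =>
    intro x
    rw [iteratedDeriv_succ, iteratedDeriv_succ, funext ih]
    have hdiff : DifferentiableAt ℝ (iteratedDeriv n f) x := by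
      have h1 : ContDiff ℝ (n + 1 : ℕ) f := hf.of_le (mod_cast le_top)
      exact (h1.differentiable_iteratedDeriv n
        (Nat.cast_lt.mpr n.lt_succ_self)).differentiableAt
    exact (hdiff.hasDerivAt.ofReal_comp).deriv

lemma fourier_const_mul (c : ℂ) (f : ℝ → ℂ) :
    𝓕 (fun ξ : ℝ => c * f ξ) = fun t => c * 𝓕 f t := by
  have h : (fun ξ : ℝ => c * f ξ) = c • f := by funext ξ; simp [Pi.smul_apply]
  rw [h]
  have := VectorFourier.fourierIntegral_const_smul (𝐞) (volume : Measure ℝ)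
    (innerₗ ℝ) f c
  funext t
  exact congrFun this t

noncomputable def vv : ℝ → ℂ := fun ξ => (Real.sqrt π : ℂ) * Complex.exp (-(π:ℂ) * π * (ξ:ℂ) ^ 2)

lemma vv_ofReal (ξ : ℝ) : vv ξ = ((Real.sqrt π * Real.exp (-(π ^ 2) * ξ ^ 2) : ℝ) : ℂ) := by
  unfold vv
  rw [Complex.ofReal_mul, Complex.ofReal_exp]
  congr 1
  push_cast
  ring

lemma integrable_pow_vv (n : ℕ) : Integrable fun ξ : ℝ => ξ ^ n • vv ξ := by
  have h : (fun ξ : ℝ => ξ ^ n • vv ξ)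
      = fun ξ : ℝ => ((Real.sqrt π * (ξ ^ n * Real.exp (-(π ^ 2) * ξ ^ 2)) : ℝ) : ℂ) := by
    funext ξ
    rw [vv_ofReal, real_smul]
    push_cast
    ring
  rw [h]
  apply Integrable.ofReal
  exact ((integrable_pow_gauss n (by positivity : (0:ℝ) < π ^ 2)).const_mul (Real.sqrt π))

lemma fourier_vv : 𝓕 vv = fun t : ℝ => Complex.exp (-(t:ℂ) ^ 2) := by
  have hπ : (0:ℝ) < π := Real.pi_pos
  have hb : (0:ℝ) < (π:ℂ).re := by simpa using hπ
  have hg := fourier_gaussian_pi (b := (π:ℂ)) hb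
  have hc : ((Real.sqrt π : ℝ) : ℂ) = (π:ℂ) ^ (1/2 : ℂ) := by
    rw [Real.sqrt_eq_rpow]
    rw [Complex.ofReal_cpow hπ.le]
    norm_num
  have hcne : ((π:ℂ) ^ (1/2 : ℂ)) ≠ 0 := by
    rw [Ne, Complex.cpow_eq_zero_iff]
    simp [Complex.ofReal_ne_zero.mpr Real.pi_ne_zero]
  unfold vv
  rw [fourier_const_mul]
  funext t
  rw [hg]
  have hpne : (π:ℂ) ≠ 0 := Complex.ofReal_ne_zero.mpr Real.pi_ne_zero
  have h2 : -(π:ℂ) / π * (t:ℂ) ^ 2 = -(t:ℂ) ^ 2 := by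
    field_simp
  simp only []
  rw [h2, hc, ← mul_assoc, mul_one_div, div_self hcne, one_mul]

lemma itd_gauss_bound (N : ℕ) (x : ℝ) :
    |iteratedDeriv (2 * N) (fun s : ℝ => Real.exp (-s ^ 2)) x|
      ≤ |iteratedDeriv (2 * N) (fun s : ℝ => Real.exp (-s ^ 2)) 0| := by
  have hint : ∀ (n : ℕ), (n : ℕ∞) ≤ (⊤ : ℕ∞) → Integrable (fun ξ : ℝ => ξ ^ n • vv ξ) :=
    fun n _ => integrable_pow_vv n
  have hD := Real.iteratedDeriv_fourier (f := vv) (N := (⊤ : ℕ∞)) (n := 2 * N)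
    hint (mod_cast le_top)
  set h : ℝ → ℂ := fun ξ : ℝ => (-2 * π * Complex.I * ξ) ^ (2 * N) • vv ξ with hh
  -- identify the iterated derivative of the real gaussian with 𝓕 h
  have hofR : ∀ y : ℝ, ((iteratedDeriv (2 * N) (fun s : ℝ => Real.exp (-s ^ 2)) y : ℝ) : ℂ)
      = 𝓕 h y := by
    intro y
    rw [← iteratedDeriv_ofReal _ contDiff_gauss]
    have hgc : (fun t : ℝ => ((Real.exp (-t ^ 2) : ℝ) : ℂ)) = 𝓕 vv := by
      rw [fourier_vv]
      funext t
      simp only [Complex.ofReal_exp, Complex.ofReal_neg, Complex.ofReal_pow]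
    rw [hgc, hD]
  -- rewrite h in terms of a nonnegative real function
  set r : ℝ → ℝ := fun ξ => (2 * π * ξ) ^ (2 * N) * (Real.sqrt π * Real.exp (-(π ^ 2) * ξ ^ 2))
    with hr
  have hrnn : ∀ ξ, 0 ≤ r ξ := by
    intro ξ
    rw [hr]
    have : (0:ℝ) ≤ (2 * π * ξ) ^ (2 * N) := by rw [pow_mul]; positivity
    positivity
  have hhr : h = fun ξ => (-1 : ℂ) ^ N * ((r ξ : ℝ) : ℂ) := by
    funext ξ
    simp only [hh, hr, smul_eq_mul]
    rw [vv_ofReal]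
    have hI : (-2 * (π:ℂ) * Complex.I * (ξ:ℂ)) ^ (2 * N)
        = (-1 : ℂ) ^ N * ((2 * π * ξ : ℝ) : ℂ) ^ (2 * N) := by
      rw [pow_mul, pow_mul]
      rw [show (-2 * (π:ℂ) * Complex.I * (ξ:ℂ)) ^ 2
          = -1 * ((2 * π * ξ : ℝ) : ℂ) ^ 2 from by
        rw [show (-2 * (π:ℂ) * Complex.I * (ξ:ℂ)) ^ 2
            = Complex.I ^ 2 * (2 * (π:ℂ) * (ξ:ℂ)) ^ 2 from by ring, Complex.I_sq]
        push_cast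
        ring]
      rw [mul_pow]
    rw [hI]
    push_cast
    ring
  have hnormh : ∀ ξ, ‖h ξ‖ = r ξ := by
    intro ξ
    rw [hhr]
    simp only []
    rw [norm_mul, norm_pow, norm_neg, norm_one, one_pow, one_mul, Complex.norm_real,
      Real.norm_eq_abs, _root_.abs_of_nonneg (hrnn ξ)]
  -- value at 0
  have hzero : 𝓕 h 0 = (-1 : ℂ) ^ N * ((∫ ξ : ℝ, r ξ : ℝ) : ℂ) := by
    rw [show 𝓕 h 0 = ∫ ξ : ℝ, h ξ by
      rw [Real.fourier_real_eq]
      simp]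
    rw [hhr]
    rw [MeasureTheory.integral_const_mul]
    congr 1
    exact integral_ofReal
  -- the bound
  have hle : ‖𝓕 h x‖ ≤ ∫ ξ : ℝ, ‖h ξ‖ :=
    VectorFourier.norm_fourierIntegral_le_integral_norm 𝐞 volume (innerₗ ℝ) h x
  have hInn : 0 ≤ ∫ ξ : ℝ, r ξ := integral_nonneg hrnn
  have hZ : ‖𝓕 h 0‖ = ∫ ξ : ℝ, r ξ := by
    rw [hzero, norm_mul, norm_pow, norm_neg, norm_one, one_pow, one_mul, Complex.norm_real,
      Real.norm_eq_abs, _root_.abs_of_nonneg hInn]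
  have habs1 : |iteratedDeriv (2 * N) (fun s : ℝ => Real.exp (-s ^ 2)) x| = ‖𝓕 h x‖ := by
    rw [← hofR x, Complex.norm_real, Real.norm_eq_abs]
  have habs2 : |iteratedDeriv (2 * N) (fun s : ℝ => Real.exp (-s ^ 2)) 0| = ‖𝓕 h 0‖ := by
    rw [← hofR 0, Complex.norm_real, Real.norm_eq_abs]
  rw [habs1, habs2, hZ]
  calc ‖𝓕 h x‖ ≤ ∫ ξ : ℝ, ‖h ξ‖ := hle
    _ = ∫ ξ : ℝ, r ξ := by congr 1; funext ξ; exact hnormh ξ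

/-- formula for the `(2N)`-th derivative of
`f(t) = e^{-2 s₁ t² + 2 s₀ τ t}` and the value of its supremum over ℝ. -/
theorem stmt10 (s0 s1 τ : ℝ) (h0 : 0 < s0) (h1 : 0 < s1) (N : ℕ) (hN : 1 ≤ N) :
    (∀ t : ℝ,
      iteratedDeriv (2 * N) (fun u : ℝ => Real.exp (-2 * s1 * u ^ 2 + 2 * s0 * τ * u)) t
        = (2 * s1) ^ N * Real.exp (-2 * s1 * t ^ 2 + 2 * s0 * τ * t) *
            hermiteH (2 * N) ((s0 * τ - 2 * s1 * t) / Real.sqrt (2 * s1))) ∧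
    sSup (Set.range fun t : ℝ =>
        |iteratedDeriv (2 * N) (fun u : ℝ => Real.exp (-2 * s1 * u ^ 2 + 2 * s0 * τ * u)) t|)
      = (2 * s1) ^ N * Real.exp (s0 ^ 2 * τ ^ 2 / (2 * s1)) * ((2 * N)! : ℝ) / (N ! : ℝ) := by
  have hs1 : (0:ℝ) < 2 * s1 := by linarith
  set α := Real.sqrt (2 * s1) with hα
  have hα0 : 0 < α := Real.sqrt_pos.mpr hs1
  have hα2 : α ^ 2 = 2 * s1 := Real.sq_sqrt hs1.le
  set β := -(s0 * τ) / α with hβ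
  set C := Real.exp (s0 ^ 2 * τ ^ 2 / (2 * s1)) with hC
  set g : ℝ → ℝ := fun s : ℝ => Real.exp (-s ^ 2) with hg
  have hexp : ∀ u : ℝ, -2 * s1 * u ^ 2 + 2 * s0 * τ * u
      = s0 ^ 2 * τ ^ 2 / (2 * s1) - (α * u + β) ^ 2 := by
    intro u
    have hαβ : α * β = -(s0 * τ) := by rw [hβ]; field_simp
    have hβ2 : β ^ 2 = s0 ^ 2 * τ ^ 2 / (2 * s1) := by
      rw [hβ, div_pow, hα2]; ring
    have expand : (α * u + β) ^ 2 = α ^ 2 * u ^ 2 + 2 * (α * β) * u + β ^ 2 := by ring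
    rw [expand, hα2, hαβ, hβ2]
    ring
  have hfe : (fun u : ℝ => Real.exp (-2 * s1 * u ^ 2 + 2 * s0 * τ * u))
      = fun u => C * g (α * u + β) := by
    funext u
    simp only [hg, hC]
    rw [hexp u, sub_eq_add_neg, Real.exp_add]
  have hgβ : ContDiff ℝ ((2 * N : ℕ) : ℕ∞) (fun z : ℝ => g (z + β)) :=
    (contDiff_gauss.comp (contDiff_id.add contDiff_const)).of_le (mod_cast le_top)
  have hcomp : ∀ t : ℝ, iteratedDeriv (2 * N) (fun u => g (α * u + β)) t
      = α ^ (2 * N) * iteratedDeriv (2 * N) g (α * t + β) := by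
    intro t
    have h1 : (fun u : ℝ => g (α * u + β)) = fun u => (fun z => g (z + β)) (α * u) := rfl
    rw [h1, iteratedDeriv_comp_const_mul hgβ α]
    rw [iteratedDeriv_comp_add_const]
  have houter : ∀ t : ℝ, iteratedDeriv (2 * N) (fun u => C * g (α * u + β)) t
      = C * iteratedDeriv (2 * N) (fun u => g (α * u + β)) t := by
    intro t
    have hcd : ContDiff ℝ ((2 * N : ℕ) : ℕ∞) (fun u : ℝ => g (α * u + β)) :=
      (contDiff_gauss.comp ((contDiff_const.mul contDiff_id).add contDiff_const)).of_le (mod_cast le_top)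
    rw [← iteratedDerivWithin_univ, ← iteratedDerivWithin_univ]
    exact iteratedDerivWithin_const_mul (Set.mem_univ t) uniqueDiffOn_univ C hcd.contDiffWithinAt
  have hαpow : α ^ (2 * N) = (2 * s1) ^ N := by rw [pow_mul, hα2]
  have hyt : ∀ t : ℝ, (s0 * τ - 2 * s1 * t) / α = -(α * t + β) := by
    intro t
    rw [hβ]
    field_simp
    linear_combination t * hα2
  have hsign : (-1 : ℝ) ^ (2 * N) = 1 := by rw [pow_mul, neg_one_sq, one_pow]
  have hCexp : ∀ t : ℝ, C * Real.exp (-(α * t + β) ^ 2)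
      = Real.exp (-2 * s1 * t ^ 2 + 2 * s0 * τ * t) := by
    intro t
    rw [hC, ← Real.exp_add, hexp t]
    ring_nf
  have hform : ∀ t : ℝ,
      iteratedDeriv (2 * N) (fun u : ℝ => Real.exp (-2 * s1 * u ^ 2 + 2 * s0 * τ * u)) t
        = (2 * s1) ^ N * Real.exp (-2 * s1 * t ^ 2 + 2 * s0 * τ * t) *
            hermiteH (2 * N) ((s0 * τ - 2 * s1 * t) / α) := by
    intro t
    rw [hfe, houter t, hcomp t, hαpow]
    rw [show iteratedDeriv (2 * N) g (α * t + β)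
        = (-1 : ℝ) ^ (2 * N) * Real.exp (-(α * t + β) ^ 2) * hermiteH (2 * N) (α * t + β)
      from itd_gauss (2 * N) (α * t + β)]
    have hHH : hermiteH (2 * N) ((s0 * τ - 2 * s1 * t) / α) = hermiteH (2 * N) (α * t + β) := by
      rw [hyt t, hermiteH_even]
    rw [hsign, hHH, ← hCexp t]
    ring
  refine ⟨hform, ?_⟩
  set M := |iteratedDeriv (2 * N) g 0| with hM
  have hMval : M = ((2 * N)! : ℝ) / (N ! : ℝ) := by
    rw [hM, itd_gauss_zero N hN, abs_mul, _root_.abs_pow, abs_neg, abs_one, one_pow, one_mul,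
      _root_.abs_of_nonneg (by positivity : (0:ℝ) ≤ ((2 * N)! : ℝ) / (N ! : ℝ))]
  have hgb : ∀ y : ℝ, |iteratedDeriv (2 * N) g y| ≤ M := fun y => itd_gauss_bound N y
  have hFt : ∀ t : ℝ,
      |iteratedDeriv (2 * N) (fun u : ℝ => Real.exp (-2 * s1 * u ^ 2 + 2 * s0 * τ * u)) t|
        = (2 * s1) ^ N * C * |iteratedDeriv (2 * N) g (-(α * t + β))| := by
    intro t
    rw [hform t, hyt t]
    rw [show iteratedDeriv (2 * N) g (-(α * t + β))
        = (-1 : ℝ) ^ (2 * N) * Real.exp (-(-(α * t + β)) ^ 2) * hermiteH (2 * N) (-(α * t + β))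
      from itd_gauss (2 * N) (-(α * t + β))]
    rw [hsign, one_mul, neg_sq]
    rw [abs_mul, abs_mul, abs_mul]
    rw [_root_.abs_of_nonneg (by positivity : (0:ℝ) ≤ (2 * s1) ^ N),
      _root_.abs_of_nonneg (Real.exp_nonneg _), _root_.abs_of_nonneg (Real.exp_nonneg _),
      ← hCexp t]
    ring
  have hgr : IsGreatest (Set.range fun t : ℝ =>
      |iteratedDeriv (2 * N) (fun u : ℝ => Real.exp (-2 * s1 * u ^ 2 + 2 * s0 * τ * u)) t|)
      ((2 * s1) ^ N * C * M) := by
    constructor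
    · refine ⟨s0 * τ / (2 * s1), ?_⟩
      have ht0 : -(α * (s0 * τ / (2 * s1)) + β) = 0 := by
        rw [← hyt (s0 * τ / (2 * s1))]
        rw [show s0 * τ - 2 * s1 * (s0 * τ / (2 * s1)) = 0 from by field_simp; ring]
        simp
      dsimp only
      rw [hFt, ht0, ← hM]
    · rintro x ⟨t, rfl⟩
      dsimp only
      rw [hFt t]
      have := hgb (-(α * t + β))
      have hpos : (0:ℝ) ≤ (2 * s1) ^ N * C := by positivity
      exact mul_le_mul_of_nonneg_left this hpos
  rw [hgr.csSup_eq, hMval]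
  ring
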